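/- Let A be a hereditary abelian category, X an object, and K_{X,m} the acyclic two-term complex with identity differential in degrees m-1, m. Then for any bounded complex M over A and any p ≥ 2, Ext^p(M, K_{X,m}) = 0 in C^b(A). -/

import Mathlib

open CategoryTheory CategoryTheory.Limits ZeroObject

universe w w' v u

variable {A : Type u} [Category.{v} A] [Abelian A]

/-- The acyclic complex `K_{X,m}`: `X` in degrees `m-1` and `m`, identity differential. -/
noncomputable def Kc (X : A) (m : ℤ) : CochainComplex A ℤ where
  X i := if i = m - 1 ∨ i = m then X else 0
  d i j := if h : i = m - 1 ∧ j = m then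
      eqToHom (by rw [if_pos (Or.inl h.1), if_pos (Or.inr h.2)]) else 0
  shape i j hij := by
    rw [dif_neg]
    rintro ⟨rfl, rfl⟩
    exact hij (by simp [ComplexShape.up_Rel])
  d_comp_d' i j k _ _ := by
    by_cases h1 : i = m - 1 ∧ j = m
    · obtain ⟨hi, hj⟩ := h1
      rw [dif_pos ⟨hi, hj⟩, dif_neg (fun h2 => by obtain ⟨h2a, h2b⟩ := h2; omega)]
      exact comp_zero
    · rw [dif_neg h1, zero_comp]

/-- The stalk complex `U_{X,n}` with `X` concentrated in degree `n`. -/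
noncomputable def Uc (X : A) (n : ℤ) : CochainComplex A ℤ :=
  (HomologicalComplex.single A (ComplexShape.up ℤ) n).obj X

/-- A complex is bounded. -/
def Bdd (M : CochainComplex A ℤ) : Prop :=
  ∃ a b : ℤ, ∀ i : ℤ, i < a ∨ b < i → IsZero (M.X i)

/-! `Kc X m` is the value at `X` of a functor `A ⥤ C(A)` which is right adjoint to evaluation in
degree `m` and left adjoint to evaluation in degree `m - 1`. Being an adjoint on both sides, it is
exact, as is evaluation, so the adjunction descends to the derived categories and gives
`Ext^p(M, K_{X,m}) ≃ Ext^p(M^m, X)`, which vanishes for `p ≥ 2` because `A` is hereditary. -/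

open DerivedCategory

namespace CategoryTheory.Adjunction

section

variable {C D : Type*} [Category C] [Category D] {G : C ⥤ D} {F : D ⥤ C} (adj : G ⊣ F)

noncomputable def mapHomologicalComplex [HasZeroMorphisms C] [HasZeroMorphisms D]
    [G.PreservesZeroMorphisms] [F.PreservesZeroMorphisms] {ι : Type*} (c : ComplexShape ι) :
    G.mapHomologicalComplex c ⊣ F.mapHomologicalComplex c :=
  Adjunction.mkOfHomEquiv
    { homEquiv K L :=
        { toFun f :=
            { f i := adj.homEquiv _ _ (f.f i)
              comm' i j _ := (adj.homEquiv_naturality_right _ _).symm.trans <|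
                (congrArg _ (f.comm i j)).trans (adj.homEquiv_naturality_left _ _) }
          invFun g :=
            { f i := (adj.homEquiv _ _).symm (g.f i)
              comm' i j _ := (adj.homEquiv_naturality_right_symm _ _).symm.trans <|
                (congrArg _ (g.comm i j)).trans (adj.homEquiv_naturality_left_symm _ _) }
          left_inv f := by ext; exact (adj.homEquiv _ _).symm_apply_apply _
          right_inv g := by ext; exact (adj.homEquiv _ _).apply_symm_apply _ }
      homEquiv_naturality_left_symm _ _ := by ext; exact adj.homEquiv_naturality_left_symm _ _
      homEquiv_naturality_right _ _ := by ext; exact adj.homEquiv_naturality_right _ _ }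

end

variable {C D : Type*} [Category C] [Category D] [Abelian C] [Abelian D]
  {G : C ⥤ D} {F : D ⥤ C} (adj : G ⊣ F) [G.Additive] [F.Additive]
  [PreservesFiniteLimits G] [PreservesFiniteColimits G]
  [PreservesFiniteLimits F] [PreservesFiniteColimits F]

noncomputable def mapDerivedCategory [HasDerivedCategory C] [HasDerivedCategory D] :
    G.mapDerivedCategory ⊣ F.mapDerivedCategory :=
  letI : CatCommSq (G.mapHomologicalComplex (.up ℤ)) Q Q G.mapDerivedCategory :=
    ⟨G.mapDerivedCategoryFactors.symm⟩
  letI : CatCommSq (F.mapHomologicalComplex (.up ℤ)) Q Q F.mapDerivedCategory :=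
    ⟨F.mapDerivedCategoryFactors.symm⟩
  (adj.mapHomologicalComplex (.up ℤ)).localization Q (HomologicalComplex.quasiIso C (.up ℤ))
    Q (HomologicalComplex.quasiIso D (.up ℤ)) _ _

noncomputable def extEquiv [HasExt.{w} C] [HasExt.{w'} D] (M : C) (X : D) (n : ℕ) :
    Abelian.Ext M (F.obj X) n ≃ Abelian.Ext (G.obj M) X n :=
  letI := HasDerivedCategory.standard C
  letI := HasDerivedCategory.standard D
  let eF : (singleFunctor C 0).obj (F.obj X)⟦(n : ℤ)⟧ ≅
      F.mapDerivedCategory.obj ((singleFunctor D 0).obj X⟦(n : ℤ)⟧) :=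
    (shiftFunctor _ (n : ℤ)).mapIso ((F.mapDerivedCategorySingleFunctor 0).app X).symm ≪≫
      ((F.mapDerivedCategory.commShiftIso (n : ℤ)).app _).symm
  Abelian.Ext.homEquiv.trans <| (Iso.homCongr (Iso.refl _) eF).trans <|
    ((adj.mapDerivedCategory.homEquiv _ _).symm.trans
      (Iso.homCongr ((G.mapDerivedCategorySingleFunctor 0).app M) (Iso.refl _))).trans
    (Abelian.Ext.homEquiv (X := G.obj M) (Y := X)).symm

end CategoryTheory.Adjunction

namespace Kc

variable (X : A) (m : ℤ)

noncomputable def XIso (i : ℤ) (h : i = m - 1 ∨ i = m) : (Kc X m).X i ≅ X := eqToIso (if_pos h)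

lemma isZero_X (i : ℤ) (h : ¬(i = m - 1 ∨ i = m)) : IsZero ((Kc X m).X i) := by
  dsimp [Kc]
  rw [if_neg h]
  exact isZero_zero A

lemma d_sub_one :
    (Kc X m).d (m - 1) m = (XIso X m (m - 1) (.inl rfl)).hom ≫ (XIso X m m (.inr rfl)).inv := by
  simp [Kc, XIso]

lemma d_eq_zero (i j : ℤ) (h : ¬(i = m - 1 ∧ j = m)) : (Kc X m).d i j = 0 :=
  dif_neg h

instance : IsIso ((Kc X m).d (m - 1) m) := by
  rw [d_sub_one]; infer_instance

variable {X m} {K : CochainComplex A ℤ}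

lemma from_hom_ext {φ φ' : Kc X m ⟶ K} (h : φ.f (m - 1) = φ'.f (m - 1)) : φ = φ' := by
  have hm : φ.f m = φ'.f m := by
    rw [← cancel_epi ((Kc X m).d (m - 1) m), ← φ.comm, ← φ'.comm, h]
  ext i
  by_cases hi : i = m - 1 ∨ i = m
  · rcases hi with hi | hi <;> subst i <;> assumption
  · exact (isZero_X X m i hi).eq_of_src _ _

lemma to_hom_ext {φ φ' : K ⟶ Kc X m} (h : φ.f m = φ'.f m) : φ = φ' := by
  have hm : φ.f (m - 1) = φ'.f (m - 1) := by
    rw [← cancel_mono ((Kc X m).d (m - 1) m), φ.comm, φ'.comm, h]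
  ext i
  by_cases hi : i = m - 1 ∨ i = m
  · rcases hi with hi | hi <;> subst i <;> assumption
  · exact (isZero_X X m i hi).eq_of_tgt _ _

noncomputable def lift (g : K.X m ⟶ X) : K ⟶ Kc X m where
  f i :=
    if h : i = m - 1 then K.d i m ≫ g ≫ (XIso X m i (.inl h)).inv
    else if h' : i = m then (K.XIsoOfEq h').hom ≫ g ≫ (XIso X m i (.inr h')).inv
    else 0
  comm' i j hij := by
    have hij : i + 1 = j := hij
    have hm : m ≠ m - 1 := by omega
    by_cases hi : i = m - 1
    · have hj : j = m := by omega
      subst i j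
      simp [hm, d_sub_one, HomologicalComplex.XIsoOfEq]
    · rw [d_eq_zero X m i j (by omega), comp_zero]
      by_cases hj : j = m - 1
      · simp [hj]
      · simp [hj, show j ≠ m by omega]

@[simp]
lemma lift_f (g : K.X m ⟶ X) : (lift g).f m = g ≫ (XIso X m m (.inr rfl)).inv := by
  have hm : m ≠ m - 1 := by omega
  simp [lift, hm, HomologicalComplex.XIsoOfEq]

@[simp]
lemma lift_f_sub_one (g : K.X m ⟶ X) :
    (lift g).f (m - 1) = K.d (m - 1) m ≫ g ≫ (XIso X m (m - 1) (.inl rfl)).inv := by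
  simp [lift]

noncomputable def desc (u : X ⟶ K.X (m - 1)) : Kc X m ⟶ K where
  f i :=
    if h : i = m - 1 then (XIso X m i (.inl h)).hom ≫ u ≫ (K.XIsoOfEq h).inv
    else if h' : i = m then (XIso X m i (.inr h')).hom ≫ u ≫ K.d (m - 1) i
    else 0
  comm' i j hij := by
    have hij : i + 1 = j := hij
    have hm : m ≠ m - 1 := by omega
    by_cases hi : i = m - 1
    · have hj : j = m := by omega
      subst i j
      simp [hm, d_sub_one, HomologicalComplex.XIsoOfEq]
    · rw [d_eq_zero X m i j (by omega), zero_comp]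
      by_cases hi' : i = m
      · subst i
        simp [hm]
      · simp [hi, hi']

@[simp]
lemma desc_f (u : X ⟶ K.X (m - 1)) :
    (desc u).f (m - 1) = (XIso X m (m - 1) (.inl rfl)).hom ≫ u := by
  simp [desc, HomologicalComplex.XIsoOfEq]

noncomputable def liftEquiv : (K.X m ⟶ X) ≃ (K ⟶ Kc X m) where
  toFun := lift
  invFun φ := φ.f m ≫ (XIso X m m (.inr rfl)).hom
  left_inv g := by simp
  right_inv φ := to_hom_ext (by simp)

noncomputable def descEquiv : (Kc X m ⟶ K) ≃ (X ⟶ K.X (m - 1)) where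
  toFun φ := (XIso X m (m - 1) (.inl rfl)).inv ≫ φ.f (m - 1)
  invFun := desc
  left_inv φ := from_hom_ext (by simp)
  right_inv u := by simp

variable (m) in
noncomputable def functor : A ⥤ CochainComplex A ℤ where
  obj X := Kc X m
  map {X Y} f := lift ((XIso X m m (.inr rfl)).hom ≫ f)
  map_id X := to_hom_ext (by simp)
  map_comp f g := to_hom_ext (by simp)

lemma lift_comp {Y : A} (g : K.X m ⟶ X) (f : X ⟶ Y) :
    lift (g ≫ f) = lift g ≫ (functor m).map f :=
  to_hom_ext (by simp [functor])

lemma desc_comp {Y : A} (f : Y ⟶ X) (u : X ⟶ K.X (m - 1)) :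
    desc (f ≫ u) = (functor m).map f ≫ desc u :=
  from_hom_ext (by simp [functor, d_sub_one])

variable (m) in
noncomputable def evalAdjunction : HomologicalComplex.eval A (.up ℤ) m ⊣ functor m :=
  Adjunction.mkOfHomEquiv
    { homEquiv _ _ := liftEquiv
      homEquiv_naturality_left_symm _ _ := Category.assoc _ _ _
      homEquiv_naturality_right := lift_comp }

variable (m) in
noncomputable def adjunctionEval : functor m ⊣ HomologicalComplex.eval A (.up ℤ) (m - 1) :=
  Adjunction.mkOfHomEquiv
    { homEquiv _ _ := descEquiv
      homEquiv_naturality_left_symm := desc_comp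
      homEquiv_naturality_right _ _ := (Category.assoc _ _ _).symm }

instance : (functor (A := A) m).IsRightAdjoint := (evalAdjunction m).isRightAdjoint

instance : (functor (A := A) m).IsLeftAdjoint := (adjunctionEval m).isLeftAdjoint

instance : (functor (A := A) m).Additive := (evalAdjunction m).right_adjoint_additive

end Kc

theorem stmt1_general [HasExt.{w} A] [HasExt.{w'} (CochainComplex A ℤ)]
    (hered : ∀ (X Y : A) (n : ℕ), 2 ≤ n → Subsingleton (Abelian.Ext X Y n))
    (X : A) (m : ℤ) (M : CochainComplex A ℤ) (p : ℕ) (hp : 2 ≤ p) :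
    Subsingleton (Abelian.Ext M (Kc X m) p) :=
  @Equiv.subsingleton _ _ ((Kc.evalAdjunction m).extEquiv M X p) (hered (M.X m) X p hp)

theorem stmt1 [HasExt.{w} A] [HasExt.{w'} (CochainComplex A ℤ)]
    (hered : ∀ (X Y : A) (n : ℕ), 2 ≤ n → Subsingleton (Abelian.Ext X Y n))
    (X : A) (m : ℤ) (M : CochainComplex A ℤ) (hM : Bdd M) (p : ℕ) (hp : 2 ≤ p) :
    Subsingleton (Abelian.Ext M (Kc X m) p) :=
  stmt1_general hered X m M p hp
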